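/- arXiv:2305.18054 — 2 statements merged into one kernel-verified Lean document; each statement's English description precedes it below -/
import Mathlib

section
/- Let a and b satisfy the Khasminskii-type condition: (x−x̄)·(a(x,μ)−a(x̄,μ̄)) + ((p_0−1)/2)‖b(x,μ)−b(x̄,μ̄)‖² ≤ L(|x−x̄|² + W_2²(μ,μ̄)) for all x, x̄, μ, μ̄, for some L > 0 and p_0 > 2. Fix R > 0 and define the truncated coefficients a^Δ(x,μ) = a(π_R(x), μ) and b^Δ(x,μ) = b(π_R(x), μ), where π_R(x) = (|x| ∧ R)·x/|x| (and π_R(0)=0). Then for every q with 2 ≤ q < p_0 there exists a constant L' > 0 (independent of R) such that x·a^Δ(x,μ) + ((q−1)/2)‖b^Δ(x,μ)‖² ≤ L'{(1+|x|)² + W_2²(μ, δ_0)} for all x ∈ ℝ^d and μ ∈ P_2(ℝ^d). -/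
open MeasureTheory ENNReal
open scoped RealInnerProductSpace

/-- The set of couplings of two measures on `ℝ^d`. -/
noncomputable def couplings {d : ℕ}
    (μ ν : Measure (EuclideanSpace ℝ (Fin d))) :
    Set (Measure (EuclideanSpace ℝ (Fin d) × EuclideanSpace ℝ (Fin d))) :=
  {π | π.map Prod.fst = μ ∧ π.map Prod.snd = ν}

/-- The 2-Wasserstein distance (as a real number). -/
noncomputable def W2 {d : ℕ} (μ ν : Measure (EuclideanSpace ℝ (Fin d))) : ℝ :=
  ((⨅ π ∈ couplings μ ν, ∫⁻ z, (‖z.1 - z.2‖₊ : ℝ≥0∞) ^ (2 : ℝ) ∂π) ^ ((1 : ℝ) / 2)).toReal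

/-- Probability measures on `ℝ^d` with finite second moment. -/
def P2 {d : ℕ} : Set (Measure (EuclideanSpace ℝ (Fin d))) :=
  {μ | IsProbabilityMeasure μ ∧ ∫⁻ y, (‖y‖₊ : ℝ≥0∞) ^ (2 : ℝ) ∂μ < ∞}

/-- The Hilbert–Schmidt (Frobenius) norm of a real matrix. -/
noncomputable def hsNorm {d m : ℕ} (A : Matrix (Fin d) (Fin m) ℝ) : ℝ :=
  Real.sqrt (∑ i, ∑ j, A i j ^ 2)

open Classical in
/-- The radial truncation `π_R(x) = (|x| ∧ R) x/|x|` (with `π_R(0) = 0`). -/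
noncomputable def trunc {d : ℕ} (R : ℝ) (x : EuclideanSpace ℝ (Fin d)) :
    EuclideanSpace ℝ (Fin d) :=
  if x = 0 then 0 else (min ‖x‖ R / ‖x‖) • x

lemma hsNorm_nonneg {d m : ℕ} (A : Matrix (Fin d) (Fin m) ℝ) : 0 ≤ hsNorm A :=
  Real.sqrt_nonneg _

lemma hsNorm_eq {d m : ℕ} (A : Matrix (Fin d) (Fin m) ℝ) :
    hsNorm A = ‖((WithLp.equiv 2 _).symm (fun p : Fin d × Fin m => A p.1 p.2) :
      EuclideanSpace ℝ (Fin d × Fin m))‖ := by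
  rw [EuclideanSpace.norm_eq]
  simp [hsNorm, Fintype.sum_prod_type, Real.norm_eq_abs, sq_abs]

lemma hsNorm_zero {d m : ℕ} : hsNorm (0 : Matrix (Fin d) (Fin m) ℝ) = 0 := by
  simp [hsNorm]

lemma hsNorm_triangle {d m : ℕ} (A B : Matrix (Fin d) (Fin m) ℝ) :
    hsNorm A ≤ hsNorm (A - B) + hsNorm B := by
  rw [hsNorm_eq A, hsNorm_eq (A - B), hsNorm_eq B]
  set f : EuclideanSpace ℝ (Fin d × Fin m) := (WithLp.equiv 2 _).symm (fun p => A p.1 p.2) with hf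
  set g : EuclideanSpace ℝ (Fin d × Fin m) := (WithLp.equiv 2 _).symm (fun p => B p.1 p.2) with hg
  have hfg : ((WithLp.equiv 2 _).symm (fun p : Fin d × Fin m => (A - B) p.1 p.2) :
      EuclideanSpace ℝ (Fin d × Fin m)) = f - g := by
    ext p
    simp [hf, hg, Matrix.sub_apply]
  rw [hfg]
  calc ‖f‖ = ‖(f - g) + g‖ := by rw [sub_add_cancel]
  _ ≤ ‖f - g‖ + ‖g‖ := norm_add_le _ _

lemma W2_self {d : ℕ} (μ : Measure (EuclideanSpace ℝ (Fin d))) : W2 μ μ = 0 := by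
  have hdiag : Measurable (fun x : EuclideanSpace ℝ (Fin d) => (x, x)) :=
    measurable_id.prodMk measurable_id
  have hπ : μ.map (fun x => (x, x)) ∈ couplings μ μ := by
    constructor
    · rw [Measure.map_map measurable_fst hdiag,
        show (Prod.fst ∘ fun x : EuclideanSpace ℝ (Fin d) => (x, x)) = id from rfl,
        Measure.map_id]
    · rw [Measure.map_map measurable_snd hdiag,
        show (Prod.snd ∘ fun x : EuclideanSpace ℝ (Fin d) => (x, x)) = id from rfl,
        Measure.map_id]
  have hmeasf : Measurable (fun z : EuclideanSpace ℝ (Fin d) × EuclideanSpace ℝ (Fin d) =>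
      (‖z.1 - z.2‖₊ : ℝ≥0∞) ^ (2 : ℝ)) := by
    measurability
  have hint : ∫⁻ z, (‖z.1 - z.2‖₊ : ℝ≥0∞) ^ (2 : ℝ) ∂(μ.map (fun x => (x, x))) = 0 := by
    rw [lintegral_map hmeasf hdiag]
    simp [ENNReal.zero_rpow_of_pos]
  have hinf : (⨅ π ∈ couplings μ μ, ∫⁻ z, (‖z.1 - z.2‖₊ : ℝ≥0∞) ^ (2 : ℝ) ∂π) = 0 := by
    refine le_antisymm ?_ zero_le
    exact le_of_le_of_eq (iInf₂_le (μ.map (fun x => (x, x))) hπ) hint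
  rw [W2, hinf, ENNReal.zero_rpow_of_pos (by norm_num)]
  simp

set_option maxHeartbeats 1000000 in
/-- The truncated coefficients `a^Δ(x,μ) = a(π_R(x),μ)`, `b^Δ(x,μ) = b(π_R(x),μ)` satisfy
the same Khasminskii-type growth bound, with a constant `L'` independent of the truncation
level `R`. -/
theorem stmt3 {d m' : ℕ}
    (a : EuclideanSpace ℝ (Fin d) → Measure (EuclideanSpace ℝ (Fin d)) →
      EuclideanSpace ℝ (Fin d))
    (b : EuclideanSpace ℝ (Fin d) → Measure (EuclideanSpace ℝ (Fin d)) →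
      Matrix (Fin d) (Fin m') ℝ)
    (L p0 : ℝ) (hL : 0 < L) (hp0 : 2 < p0)
    (h0 : ∀ μ : Measure (EuclideanSpace ℝ (Fin d)), μ ∈ P2 →
      ‖a 0 μ‖ + hsNorm (b 0 μ) ≤ L * W2 μ (Measure.dirac 0))
    (hkh : ∀ (x x' : EuclideanSpace ℝ (Fin d))
        (μ μ' : Measure (EuclideanSpace ℝ (Fin d))), μ ∈ P2 → μ' ∈ P2 →
      ⟪x - x', a x μ - a x' μ'⟫ + (p0 - 1) / 2 * hsNorm (b x μ - b x' μ') ^ 2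
        ≤ L * (‖x - x'‖ ^ 2 + W2 μ μ' ^ 2)) :
    ∀ q : ℝ, 2 ≤ q → q < p0 → ∃ L' : ℝ, 0 < L' ∧
      ∀ R : ℝ, 0 < R →
      ∀ (x : EuclideanSpace ℝ (Fin d)) (μ : Measure (EuclideanSpace ℝ (Fin d))),
        μ ∈ P2 →
        ⟪x, a (trunc R x) μ⟫ + (q - 1) / 2 * hsNorm (b (trunc R x) μ) ^ 2
          ≤ L' * ((1 + ‖x‖) ^ 2 + W2 μ (Measure.dirac 0) ^ 2) := by
  intro q hq2 hqp
  have hq1 : (0:ℝ) < q - 1 := by linarith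
  set ε : ℝ := (p0 - q) / (q - 1) with hεdef
  have hε : 0 < ε := div_pos (by linarith) hq1
  set K : ℝ := (q - 1) / 2 * (1 + 1 / ε) with hKdef
  have hK : 0 < K := by positivity
  have hεq : (q - 1) / 2 * (1 + ε) = (p0 - 1) / 2 := by
    rw [hεdef]; field_simp; ring
  refine ⟨2 * L + K * L ^ 2 + 1, by positivity, ?_⟩
  intro R hR x μ hμ
  set W : ℝ := W2 μ (Measure.dirac 0) with hWdef
  have hW0 : 0 ≤ W := ENNReal.toReal_nonneg
  have h0' := h0 μ hμ
  have ha0a : ‖a 0 μ‖ ≤ L * W := by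
    have := hsNorm_nonneg (b 0 μ); linarith
  have ha0b : hsNorm (b 0 μ) ≤ L * W := by
    have := norm_nonneg (a 0 μ); linarith
  set y : EuclideanSpace ℝ (Fin d) := trunc R x with hydef
  set s : ℝ := hsNorm (b y μ - b 0 μ) with hsdef
  have hs0 : 0 ≤ s := hsNorm_nonneg _
  -- key growth estimate for the a-part and the difference of b
  have key : ⟪x, a y μ⟫ + (p0 - 1) / 2 * s ^ 2 ≤ L * ‖x‖ ^ 2 + ‖x‖ * (L * W) := by
    rcases eq_or_ne x 0 with hx0 | hx0
    · subst hx0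
      have hy0 : y = 0 := by simp [hydef, trunc]
      rw [hsdef, hy0]
      simp [hsNorm_zero, inner_zero_left]
    · have hxn : (0:ℝ) < ‖x‖ := norm_pos_iff.2 hx0
      set r : ℝ := min ‖x‖ R with hrdef
      have hr : 0 < r := lt_min hxn hR
      have hyx' : y = (r / ‖x‖) • x := by rw [hydef, trunc, if_neg hx0]
      have hyn : ‖y‖ = r := by
        rw [hyx', norm_smul, Real.norm_eq_abs, abs_of_pos (div_pos hr hxn),
          div_mul_cancel₀ _ hxn.ne']
      set lam : ℝ := ‖x‖ / r with hlamdef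
      have hlam1 : 1 ≤ lam := (one_le_div hr).2 (min_le_left _ _)
      have hlam0 : 0 ≤ lam := by linarith
      have hx : x = lam • y := by
        rw [hyx', smul_smul, hlamdef, div_mul_div_comm,
          mul_comm ‖x‖ r, div_self (by positivity), one_smul]
      have hlamy : lam * ‖y‖ = ‖x‖ := by
        rw [hyn, hlamdef, div_mul_cancel₀ _ hr.ne']
      have hyle : ‖y‖ ≤ ‖x‖ := by rw [hyn]; exact min_le_left _ _
      have hA : ⟪y, a y μ - a 0 μ⟫ + (p0 - 1) / 2 * s ^ 2 ≤ L * ‖y‖ ^ 2 := by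
        have h := hkh y 0 μ μ hμ hμ
        rw [sub_zero, W2_self] at h
        rw [hsdef]
        nlinarith [h]
      have hinner : ⟪x, a y μ⟫ = lam * ⟪y, a y μ - a 0 μ⟫ + ⟪x, a 0 μ⟫ := by
        have h1 : ⟪x, a y μ - a 0 μ⟫ = lam * ⟪y, a y μ - a 0 μ⟫ := by
          conv_lhs => rw [hx]
          exact real_inner_smul_left _ _ _
        have h2 : ⟪x, a y μ - a 0 μ⟫ = ⟪x, a y μ⟫ - ⟪x, a 0 μ⟫ := inner_sub_right _ _ _
        linarith
      have hAlam : lam * (⟪y, a y μ - a 0 μ⟫ + (p0 - 1) / 2 * s ^ 2) ≤ lam * (L * ‖y‖ ^ 2) :=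
        mul_le_mul_of_nonneg_left hA hlam0
      have h7 : lam * (L * ‖y‖ ^ 2) = L * ‖x‖ * ‖y‖ := by
        rw [← hlamy]; ring
      have h8 : L * ‖x‖ * ‖y‖ ≤ L * ‖x‖ * ‖x‖ :=
        mul_le_mul_of_nonneg_left hyle (by positivity)
      have hcs : ⟪x, a 0 μ⟫ ≤ ‖x‖ * ‖a 0 μ‖ := real_inner_le_norm _ _
      have hxa0 : ‖x‖ * ‖a 0 μ‖ ≤ ‖x‖ * (L * W) :=
        mul_le_mul_of_nonneg_left ha0a (norm_nonneg x)
      have hextra : 0 ≤ (p0 - 1) / 2 * ((lam - 1) * s ^ 2) :=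
        mul_nonneg (by linarith) (mul_nonneg (by linarith) (sq_nonneg s))
      nlinarith [hAlam, h7, h8, hcs, hxa0, hextra, hinner]
  -- the b-part
  set t : ℝ := hsNorm (b 0 μ) with htdef
  have ht0 : 0 ≤ t := hsNorm_nonneg _
  set u : ℝ := hsNorm (b y μ) with hudef
  have hu0 : 0 ≤ u := hsNorm_nonneg _
  have htri : u ≤ s + t := hsNorm_triangle _ _
  have h2st : 2 * s * t ≤ ε * s ^ 2 + (1 / ε) * t ^ 2 := by
    have hid : ε * s ^ 2 + (1 / ε) * t ^ 2 - 2 * s * t = (ε * s - t) ^ 2 / ε := by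
      field_simp; ring
    nlinarith [div_nonneg (sq_nonneg (ε * s - t)) hε.le]
  have hsq : u ^ 2 ≤ (1 + ε) * s ^ 2 + (1 + 1 / ε) * t ^ 2 := by
    nlinarith [mul_self_le_mul_self hu0 htri]
  have h5 : (q - 1) / 2 * u ^ 2 ≤ (p0 - 1) / 2 * s ^ 2 + K * t ^ 2 := by
    have := mul_le_mul_of_nonneg_left hsq (show (0:ℝ) ≤ (q - 1) / 2 by linarith)
    calc (q - 1) / 2 * u ^ 2
        ≤ (q - 1) / 2 * ((1 + ε) * s ^ 2 + (1 + 1 / ε) * t ^ 2) := this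
      _ = ((q - 1) / 2 * (1 + ε)) * s ^ 2 + K * t ^ 2 := by rw [hKdef]; ring
      _ = (p0 - 1) / 2 * s ^ 2 + K * t ^ 2 := by rw [hεq]
  have ht2 : t ^ 2 ≤ L ^ 2 * W ^ 2 := by nlinarith [mul_self_le_mul_self ht0 ha0b]
  have hKt : K * t ^ 2 ≤ K * (L ^ 2 * W ^ 2) := mul_le_mul_of_nonneg_left ht2 hK.le
  have hxw : ‖x‖ * (L * W) ≤ L * ((‖x‖ ^ 2 + W ^ 2) / 2) := by
    nlinarith [sq_nonneg (‖x‖ - W), mul_le_mul_of_nonneg_left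
      (show ‖x‖ * W ≤ (‖x‖ ^ 2 + W ^ 2) / 2 by nlinarith [sq_nonneg (‖x‖ - W)]) hL.le]
  have hfinal : L * ‖x‖ ^ 2 + L * ((‖x‖ ^ 2 + W ^ 2) / 2) + K * (L ^ 2 * W ^ 2)
      ≤ (2 * L + K * L ^ 2 + 1) * ((1 + ‖x‖) ^ 2 + W ^ 2) := by
    nlinarith [sq_nonneg W, norm_nonneg x, sq_nonneg ‖x‖, hL, hK,
      mul_nonneg (mul_nonneg hK.le (sq_nonneg L)) (sq_nonneg ‖x‖),
      mul_nonneg hK.le (sq_nonneg L),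
      mul_nonneg hL.le (norm_nonneg x), sq_nonneg (1 + ‖x‖)]
  linarith [key, h5, hKt, hxw, hfinal]
end

section
/- With notation as in the random batch setting (N = nP, uniform random partition into n batches of size P, fixed configuration x and kernel k), the variance of the random deviation satisfies E[|χ_i(x;k)|²] = (1/(P−1) − 1/(N−1)) · Λ_i(x;k), where Λ_i(x;k) = (1/(N−2)) ∑_{j≠i} ‖k(x^i,x^j) − (1/(N−1))∑_{j'≠i} k(x^i,x^{j'})‖². -/
open Finset

/-- The type of assignments of the `N` particles to `n` batches in which every batch
has exactly `P` members. A uniformly random such assignment models the uniform random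
partition of `{1,…,N}` into `n` batches of size `P` (with `N = nP`). -/
def BatchAssign (N n P : ℕ) : Type :=
  {c : Fin N → Fin n // ∀ q : Fin n, (Finset.univ.filter fun i => c i = q).card = P}

instance (N n P : ℕ) : Fintype (BatchAssign N n P) :=
  inferInstanceAs (Fintype {c : Fin N → Fin n //
    ∀ q : Fin n, (Finset.univ.filter fun i => c i = q).card = P})

/-- The random batch deviation
`χ_i(x;k) = (1/(P−1)) ∑_{j∈C(i), j≠i} k(xⁱ,xʲ) − (1/(N−1)) ∑_{j≠i} k(xⁱ,xʲ)`,
for the batch structure described by `c`. -/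
noncomputable def chi {d N n : ℕ} (P : ℕ)
    (x : Fin N → EuclideanSpace ℝ (Fin d))
    (k : EuclideanSpace ℝ (Fin d) → EuclideanSpace ℝ (Fin d) → EuclideanSpace ℝ (Fin d))
    (i : Fin N) (c : Fin N → Fin n) : EuclideanSpace ℝ (Fin d) :=
  ((P : ℝ) - 1)⁻¹ • ∑ j ∈ Finset.univ.filter (fun j => c j = c i ∧ j ≠ i), k (x i) (x j)
    - ((N : ℝ) - 1)⁻¹ • ∑ j ∈ Finset.univ.filter (fun j => j ≠ i), k (x i) (x j)

namespace Stmt6Aux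

lemma filter_comp_perm {N n : ℕ} (c : Fin N → Fin n) (σ : Equiv.Perm (Fin N)) (q : Fin n) :
    (univ.filter fun j => c (σ j) = q) = (univ.filter fun j => c j = q).map σ.symm.toEmbedding := by
  ext j
  simp [Equiv.symm_apply_eq, eq_comm]

def permBA {N n P : ℕ} (σ : Equiv.Perm (Fin N)) : BatchAssign N n P ≃ BatchAssign N n P where
  toFun c := ⟨fun j => c.1 (σ j), fun q => by
    rw [filter_comp_perm c.1 σ q, card_map]; exact c.2 q⟩
  invFun c := ⟨fun j => c.1 (σ.symm j), fun q => by
    rw [filter_comp_perm c.1 σ.symm q, card_map]; exact c.2 q⟩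
  left_inv c := Subtype.ext (by funext j; simp)
  right_inv c := Subtype.ext (by funext j; simp)

lemma exists_batchAssign {N n P : ℕ} (hN : N = n * P) :
    Nonempty (BatchAssign N n P) := by
  have h : N = P * n := by rw [hN, mul_comm]
  let e : Fin N ≃ Fin P × Fin n := (finCongr h).trans finProdFinEquiv.symm
  refine ⟨⟨fun j => (e j).2, fun q => ?_⟩⟩
  have h1 : (univ.filter fun j : Fin N => (e j).2 = q).card
      = (univ.filter fun p : Fin P × Fin n => p.2 = q).card :=
    Finset.card_equiv e (by simp)
  rw [h1]
  have h2 : (univ.filter fun p : Fin P × Fin n => p.2 = q) = univ ×ˢ {q} := by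
    ext p; simp [Finset.mem_product]; constructor
    · rintro rfl; exact ⟨p.1, rfl⟩
    · rintro ⟨a, rfl⟩; rfl
  rw [h2]
  simp

variable {N n P : ℕ}

lemma batch_card (i : Fin N) (c : BatchAssign N n P) :
    ((univ.filter fun j => j ≠ i).filter fun j => c.1 j = c.1 i).card = P - 1 := by
  have h1 : ((univ.filter fun j => j ≠ i).filter fun j => c.1 j = c.1 i)
      = (univ.filter fun j => c.1 j = c.1 i).erase i := by
    ext j; simp [and_comm]
  rw [h1, Finset.card_erase_of_mem (by simp), c.2 (c.1 i)]

lemma card_S (i : Fin N) : (univ.filter fun j : Fin N => j ≠ i).card = N - 1 := by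
  have : (univ.filter fun j : Fin N => j ≠ i) = univ.erase i := by ext j; simp
  rw [this, Finset.card_erase_of_mem (mem_univ i), card_univ, Fintype.card_fin]

lemma count_one_const (i j l : Fin N) (hj : j ≠ i) (hl : l ≠ i) :
    (univ.filter fun c : BatchAssign N n P => c.1 j = c.1 i).card
      = (univ.filter fun c : BatchAssign N n P => c.1 l = c.1 i).card := by
  refine Finset.card_equiv (permBA (Equiv.swap j l)) fun c => ?_
  simp only [mem_filter, mem_univ, true_and, permBA, Equiv.coe_fn_mk]
  show c.1 j = c.1 i ↔ c.1 (Equiv.swap j l l) = c.1 (Equiv.swap j l i)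
  rw [Equiv.swap_apply_right, Equiv.swap_apply_of_ne_of_ne (Ne.symm hj) (Ne.symm hl)]

lemma count_one (i j : Fin N) (hj : j ≠ i) :
    (N - 1) * (univ.filter fun c : BatchAssign N n P => c.1 j = c.1 i).card
      = Fintype.card (BatchAssign N n P) * (P - 1) := by
  have key : ∑ l ∈ univ.filter (fun l : Fin N => l ≠ i),
      (univ.filter fun c : BatchAssign N n P => c.1 l = c.1 i).card
      = Fintype.card (BatchAssign N n P) * (P - 1) := by
    simp only [Finset.card_filter]
    rw [Finset.sum_comm]
    simp only [← Finset.card_filter]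
    rw [Finset.sum_congr rfl fun c _ => batch_card i c]
    rw [Finset.sum_const, card_univ, smul_eq_mul]
  rw [← key, Finset.sum_congr rfl fun l hl => count_one_const i l j (by simpa using hl) hj]
  rw [Finset.sum_const, card_S, smul_eq_mul]

lemma count_two_const (i j j' l' : Fin N) (hj : j ≠ i) (hj' : j' ≠ i) (hl' : l' ≠ i)
    (hjj' : j' ≠ j) (hjl' : l' ≠ j) :
    (univ.filter fun c : BatchAssign N n P => c.1 j = c.1 i ∧ c.1 j' = c.1 i).card
      = (univ.filter fun c : BatchAssign N n P => c.1 j = c.1 i ∧ c.1 l' = c.1 i).card := by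
  refine Finset.card_equiv (permBA (Equiv.swap j' l')) fun c => ?_
  simp only [mem_filter, mem_univ, true_and, permBA, Equiv.coe_fn_mk]
  show c.1 j = c.1 i ∧ c.1 j' = c.1 i ↔
    c.1 (Equiv.swap j' l' j) = c.1 (Equiv.swap j' l' i) ∧ c.1 (Equiv.swap j' l' l') = c.1 (Equiv.swap j' l' i)
  rw [Equiv.swap_apply_right, Equiv.swap_apply_of_ne_of_ne (Ne.symm hj') (Ne.symm hl'),
    Equiv.swap_apply_of_ne_of_ne (fun h => hjj' h.symm) (fun h => hjl' h.symm)]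

lemma count_two (i j j' : Fin N) (hj : j ≠ i) (hj' : j' ≠ i) (hjj' : j' ≠ j) :
    (N - 2) * (univ.filter fun c : BatchAssign N n P => c.1 j = c.1 i ∧ c.1 j' = c.1 i).card
      = (P - 2) * (univ.filter fun c : BatchAssign N n P => c.1 j = c.1 i).card := by
  have key : ∑ l' ∈ (univ.filter fun l : Fin N => l ≠ i).erase j,
      (univ.filter fun c : BatchAssign N n P => c.1 j = c.1 i ∧ c.1 l' = c.1 i).card
      = (P - 2) * (univ.filter fun c : BatchAssign N n P => c.1 j = c.1 i).card := by
    simp only [Finset.card_filter]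
    rw [Finset.sum_comm]
    have inner : ∀ c : BatchAssign N n P,
        (∑ l' ∈ (univ.filter fun l : Fin N => l ≠ i).erase j,
          if c.1 j = c.1 i ∧ c.1 l' = c.1 i then 1 else 0)
        = if c.1 j = c.1 i then P - 2 else 0 := by
      intro c
      by_cases h : c.1 j = c.1 i
      · simp only [h, true_and, if_true, ← Finset.card_filter]
        rw [Finset.filter_erase, Finset.card_erase_of_mem (by simp [hj, h]), batch_card i c]
        omega
      · simp [h]
    rw [Finset.sum_congr rfl fun c _ => inner c, Finset.mul_sum]
    exact Finset.sum_congr rfl fun c _ => by split <;> simp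
  rw [← key, Finset.sum_congr rfl fun l' hl' => by
    simp only [Finset.mem_erase, mem_filter] at hl'
    exact count_two_const i j l' j' hj hl'.2.2 hj' hl'.1 hjj']
  rw [Finset.sum_const, Finset.card_erase_of_mem (by simp [hj]), card_S, smul_eq_mul]
  congr 1

lemma ite_ite_sum {κ : Type*} [Fintype κ] (p q : κ → Prop) [DecidablePred p] [DecidablePred q]
    (r : ℝ) :
    ∑ c : κ, (if p c then (if q c then r else 0) else 0)
      = ((univ.filter fun c => p c ∧ q c).card : ℝ) * r := by
  rw [Finset.sum_congr rfl fun c _ => by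
    show _ = if p c ∧ q c then r else 0
    by_cases h1 : p c <;> by_cases h2 : q c <;> simp [h1, h2]]
  rw [Finset.sum_ite, Finset.sum_const, Finset.sum_const]
  simp [nsmul_eq_mul]

lemma key_alg {F : Type*} [NormedAddCommGroup F] [InnerProductSpace ℝ F]
    {ι κ : Type*} [DecidableEq ι] [Fintype κ] (S : Finset ι) (b : ι → F)
    (hb : ∑ j ∈ S, b j = 0) (w : κ → ι → Prop) [∀ c, DecidablePred (w c)]
    (t1 t2 : ℝ)
    (h1 : ∀ j ∈ S, ((univ.filter fun c : κ => w c j).card : ℝ) = t1)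
    (h2 : ∀ j ∈ S, ∀ j' ∈ S, j' ≠ j →
      ((univ.filter fun c : κ => w c j ∧ w c j').card : ℝ) = t2) :
    ∑ c : κ, ‖∑ j ∈ S.filter (w c), b j‖ ^ 2 = (t1 - t2) * ∑ j ∈ S, ‖b j‖ ^ 2 := by
  have expand : ∀ c : κ, ‖∑ j ∈ S.filter (w c), b j‖ ^ 2
      = ∑ j ∈ S, (if w c j then (∑ j' ∈ S,
          (if w c j' then (inner ℝ (b j) (b j') : ℝ) else 0)) else 0) := by
    intro c
    rw [← real_inner_self_eq_norm_sq, sum_inner]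
    simp only [inner_sum]
    rw [Finset.sum_filter]
    exact Finset.sum_congr rfl fun j _ => by
      by_cases h : w c j <;> simp [h, Finset.sum_filter]
  rw [Finset.sum_congr rfl fun c _ => expand c, Finset.sum_comm]
  have inner_eval : ∀ j ∈ S,
      (∑ c : κ, (if w c j then (∑ j' ∈ S, (if w c j' then (inner ℝ (b j) (b j') : ℝ) else 0)) else 0))
      = (t1 - t2) * ‖b j‖ ^ 2 := by
    intro j hj
    have swap1 : ∀ c : κ, (if w c j then (∑ j' ∈ S, (if w c j' then (inner ℝ (b j) (b j') : ℝ) else 0)) else 0)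
        = ∑ j' ∈ S, (if w c j then (if w c j' then (inner ℝ (b j) (b j') : ℝ) else 0) else 0) := by
      intro c; by_cases h : w c j <;> simp [h]
    rw [Finset.sum_congr rfl fun c _ => swap1 c, Finset.sum_comm]
    have term : ∀ j' ∈ S, (∑ c : κ, (if w c j then (if w c j' then (inner ℝ (b j) (b j') : ℝ) else 0) else 0))
        = ((univ.filter fun c : κ => w c j ∧ w c j').card : ℝ) * (inner ℝ (b j) (b j') : ℝ) :=
      fun j' _ => ite_ite_sum _ _ _
    rw [Finset.sum_congr rfl term]
    rw [← Finset.add_sum_erase _ _ hj]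
    have diag : ((univ.filter fun c : κ => w c j ∧ w c j).card : ℝ) * (inner ℝ (b j) (b j) : ℝ)
        = t1 * ‖b j‖ ^ 2 := by
      rw [real_inner_self_eq_norm_sq, ← h1 j hj]
      congr 2
      simp
    have off : ∑ j' ∈ S.erase j,
        ((univ.filter fun c : κ => w c j ∧ w c j').card : ℝ) * (inner ℝ (b j) (b j') : ℝ)
        = - (t2 * ‖b j‖ ^ 2) := by
      rw [Finset.sum_congr rfl fun j' hj' =>
        by rw [h2 j hj j' (Finset.mem_of_mem_erase hj') (Finset.ne_of_mem_erase hj')]]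
      rw [← Finset.mul_sum, ← inner_sum]
      have hs : ∑ j' ∈ S.erase j, b j' = - b j := by
        have h0 := Finset.add_sum_erase S b hj
        rw [hb] at h0
        exact eq_neg_of_add_eq_zero_right h0
      rw [hs, inner_neg_right, real_inner_self_eq_norm_sq]
      ring
    rw [diag, off]
    ring
  rw [Finset.sum_congr rfl inner_eval, Finset.mul_sum]

end Stmt6Aux

/-- Variance of the random batch deviation:
`E|χ_i(x;k)|² = (1/(P−1) − 1/(N−1)) Λ_i(x;k)` where
`Λ_i(x;k) = (1/(N−2)) ∑_{j≠i} ‖k(xⁱ,xʲ) − (1/(N−1))∑_{j'≠i} k(xⁱ,x^{j'})‖²`. -/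
theorem stmt6 {d : ℕ} (n P N : ℕ) (hP : 2 ≤ P) (hN : N = n * P) (hPN : P < N)
    (x : Fin N → EuclideanSpace ℝ (Fin d))
    (k : EuclideanSpace ℝ (Fin d) → EuclideanSpace ℝ (Fin d) → EuclideanSpace ℝ (Fin d))
    (i : Fin N) :
    (Fintype.card (BatchAssign N n P) : ℝ)⁻¹ *
        ∑ c : BatchAssign N n P, ‖chi P x k i c.1‖ ^ 2
      = (((P : ℝ) - 1)⁻¹ - ((N : ℝ) - 1)⁻¹) *
          (((N : ℝ) - 2)⁻¹ *
            ∑ j ∈ Finset.univ.filter (fun j => j ≠ i),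
              ‖k (x i) (x j) -
                ((N : ℝ) - 1)⁻¹ •
                  ∑ j' ∈ Finset.univ.filter (fun j' => j' ≠ i), k (x i) (x j')‖ ^ 2) := by
  classical
  have hN3 : 3 ≤ N := by omega
  have hP2 : (2:ℝ) ≤ (P:ℝ) := by exact_mod_cast hP
  have hNP : (P:ℝ) < (N:ℝ) := by exact_mod_cast hPN
  have hP1 : ((P:ℝ) - 1) ≠ 0 := by linarith
  have hN1 : ((N:ℝ) - 1) ≠ 0 := by linarith
  have hN2 : ((N:ℝ) - 2) ≠ 0 := by linarith
  have hMpos : 0 < Fintype.card (BatchAssign N n P) :=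
    Fintype.card_pos_iff.mpr (Stmt6Aux.exists_batchAssign hN)
  have hM : ((Fintype.card (BatchAssign N n P) : ℝ)) ≠ 0 := by
    exact_mod_cast hMpos.ne'
  set S : Finset (Fin N) := Finset.univ.filter (fun j => j ≠ i) with hSdef
  set m : EuclideanSpace ℝ (Fin d) :=
    ((N : ℝ) - 1)⁻¹ • ∑ j' ∈ Finset.univ.filter (fun j' : Fin N => j' ≠ i), k (x i) (x j')
    with hmdef
  set b : Fin N → EuclideanSpace ℝ (Fin d) := fun j => k (x i) (x j) - m with hbdef
  -- rewrite chi
  have hchi : ∀ c : BatchAssign N n P,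
      chi P x k i c.1 = ((P:ℝ)-1)⁻¹ • ∑ j ∈ S.filter (fun j => c.1 j = c.1 i), b j := by
    intro c
    have hfilter : (Finset.univ.filter fun j : Fin N => c.1 j = c.1 i ∧ j ≠ i)
        = S.filter (fun j => c.1 j = c.1 i) := by
      ext j; simp [hSdef, and_comm]
    have hsum : ∑ j ∈ S.filter (fun j => c.1 j = c.1 i), b j
        = (∑ j ∈ S.filter (fun j => c.1 j = c.1 i), k (x i) (x j)) - ((P:ℝ)-1) • m := by
      rw [hbdef]
      rw [Finset.sum_sub_distrib, Finset.sum_const]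
      congr 1
      rw [Stmt6Aux.batch_card i c, ← Nat.cast_smul_eq_nsmul ℝ,
        Nat.cast_sub (by omega : 1 ≤ P), Nat.cast_one]
    rw [hsum, smul_sub, smul_smul, inv_mul_cancel₀ hP1, one_smul]
    unfold chi
    rw [hfilter]
  -- rewrite the summand
  have hnorm : ∀ c : BatchAssign N n P,
      ‖chi P x k i c.1‖ ^ 2 = (((P:ℝ)-1)⁻¹)^2 * ‖∑ j ∈ S.filter (fun j => c.1 j = c.1 i), b j‖ ^ 2 := by
    intro c
    rw [hchi c, norm_smul, mul_pow, Real.norm_eq_abs, sq_abs]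
  -- the constants
  set M : ℕ := Fintype.card (BatchAssign N n P) with hMdef
  set t1 : ℝ := (M:ℝ) * ((P:ℝ)-1) / ((N:ℝ)-1) with ht1
  set t2 : ℝ := ((P:ℝ)-2) * t1 / ((N:ℝ)-2) with ht2
  have h1 : ∀ j ∈ S, ((univ.filter fun c : BatchAssign N n P => c.1 j = c.1 i).card : ℝ) = t1 := by
    intro j hj
    have hji : j ≠ i := by simp [hSdef] at hj; exact hj
    have h := Stmt6Aux.count_one (P := P) (n := n) i j hji
    have hcast : ((N:ℝ) - 1) * ((univ.filter fun c : BatchAssign N n P => c.1 j = c.1 i).card : ℝ)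
        = (M:ℝ) * ((P:ℝ) - 1) := by
      have := congrArg (Nat.cast (R := ℝ)) h
      push_cast [Nat.cast_sub (show 1 ≤ N by omega), Nat.cast_sub (show 1 ≤ P by omega)] at this
      exact_mod_cast this
    rw [ht1, eq_div_iff hN1]
    linarith [hcast]
  have h2 : ∀ j ∈ S, ∀ j' ∈ S, j' ≠ j →
      ((univ.filter fun c : BatchAssign N n P => c.1 j = c.1 i ∧ c.1 j' = c.1 i).card : ℝ) = t2 := by
    intro j hj j' hj' hne
    have hji : j ≠ i := by simp [hSdef] at hj; exact hj
    have hj'i : j' ≠ i := by simp [hSdef] at hj'; exact hj'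
    have h := Stmt6Aux.count_two (P := P) (n := n) i j j' hji hj'i hne
    have hcast : ((N:ℝ) - 2) * ((univ.filter fun c : BatchAssign N n P => c.1 j = c.1 i ∧ c.1 j' = c.1 i).card : ℝ)
        = ((P:ℝ) - 2) * ((univ.filter fun c : BatchAssign N n P => c.1 j = c.1 i).card : ℝ) := by
      have := congrArg (Nat.cast (R := ℝ)) h
      push_cast [Nat.cast_sub (show 2 ≤ N by omega), Nat.cast_sub hP] at this
      exact_mod_cast this
    rw [h1 j hj] at hcast
    rw [ht2, eq_div_iff hN2]
    linarith [hcast]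
  -- sum of b vanishes
  have hb0 : ∑ j ∈ S, b j = 0 := by
    rw [hbdef]
    rw [Finset.sum_sub_distrib, Finset.sum_const]
    have hcard : S.card = N - 1 := Stmt6Aux.card_S i
    rw [hcard, ← Nat.cast_smul_eq_nsmul ℝ, Nat.cast_sub (show 1 ≤ N by omega), Nat.cast_one,
      hmdef, smul_smul, mul_inv_cancel₀ hN1, one_smul]
    have : (Finset.univ.filter (fun j' : Fin N => j' ≠ i)) = S := by rw [hSdef]
    rw [this, sub_self]
  -- the key identity
  have hkey := Stmt6Aux.key_alg S b hb0 (fun (c : BatchAssign N n P) j => c.1 j = c.1 i) t1 t2 h1 h2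
  -- assemble
  rw [Finset.sum_congr rfl fun c _ => hnorm c, ← Finset.mul_sum, hkey]
  have hSb : ∑ j ∈ Finset.univ.filter (fun j => j ≠ i),
      ‖k (x i) (x j) - ((N : ℝ) - 1)⁻¹ •
        ∑ j' ∈ Finset.univ.filter (fun j' => j' ≠ i), k (x i) (x j')‖ ^ 2
      = ∑ j ∈ S, ‖b j‖ ^ 2 := rfl
  rw [hSb]
  rw [ht2, ht1]
  field_simp
  ring
end
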